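/- The function φ₀(r) = -(1/r)·∫₀ʳ s·e^{s²/2}·(∫ₛ^∞ e^{-l²/2}·k(l) dl) ds satisfies the ODE φ₀'' + (1/r)·φ₀' - (1/r²)·φ₀ - φ₀ - r·φ₀' = k(r) for all r > 0, together with φ₀(0) = 0 (interpreted as the limit as r → 0⁺). -/

import Mathlib

open Real MeasureTheory intervalIntegral Set Filter

/-- Zhang's explicit solution profile. -/
noncomputable def phi0 (k : ℝ → ℝ) (r : ℝ) : ℝ :=
  -(1/r) * ∫ s in (0:ℝ)..r, s * Real.exp (s^2/2) * (∫ l in Set.Ioi s, Real.exp (-l^2/2) * k l)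

noncomputable def gg (k : ℝ → ℝ) (l : ℝ) : ℝ := Real.exp (-l^2/2) * k l
noncomputable def FF (k : ℝ → ℝ) (s : ℝ) : ℝ := ∫ l in Set.Ioi s, gg k l
noncomputable def GG (k : ℝ → ℝ) (r : ℝ) : ℝ := ∫ s in (0:ℝ)..r, s * Real.exp (s^2/2) * FF k s

lemma phi0_eq (k : ℝ → ℝ) (r : ℝ) : phi0 k r = -(1/r) * GG k r := rfl

variable {k : ℝ → ℝ}

lemma cont_gg (k : ℝ → ℝ) (hk : ContDiff ℝ (⊤ : ℕ∞) k) : Continuous (gg k) :=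
  (Real.continuous_exp.comp (by continuity)).mul hk.continuous

lemma integrable_gg (k : ℝ → ℝ) (hk : ContDiff ℝ (⊤ : ℕ∞) k) (hsupp : Function.support k ⊆ Set.Icc 0 1) : Integrable (gg k) := by
  have hc : HasCompactSupport (gg k) := by
    apply HasCompactSupport.intro (isCompact_Icc (a := (0:ℝ)) (b := 1))
    intro x hx
    have : k x = 0 := by
      by_contra h
      exact hx (hsupp h)
    simp [gg, this]
  exact (cont_gg k hk).integrable_of_hasCompactSupport hc

lemma FF_eq (k : ℝ → ℝ) (hk : ContDiff ℝ (⊤ : ℕ∞) k) (hsupp : Function.support k ⊆ Set.Icc 0 1) (s : ℝ) : FF k s = FF k 0 - ∫ l in (0:ℝ)..s, gg k l := by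
  have hi := integrable_gg k hk hsupp
  have h1 : ∀ a : ℝ, FF k a = (∫ l, gg k l) - ∫ l in Set.Iic a, gg k l := by
    intro a
    have := MeasureTheory.integral_add_compl (measurableSet_Iic (a := a)) hi
    rw [Set.compl_Iic] at this
    simp only [FF]
    linarith [this]
  rw [h1 s, h1 0, ← intervalIntegral.integral_Iic_sub_Iic hi.integrableOn hi.integrableOn]
  ring

lemma hasDerivAt_FF (k : ℝ → ℝ) (hk : ContDiff ℝ (⊤ : ℕ∞) k) (hsupp : Function.support k ⊆ Set.Icc 0 1) (s : ℝ) : HasDerivAt (FF k) (-(gg k s)) s := by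
  have h : (FF k) = fun s => FF k 0 - ∫ l in (0:ℝ)..s, gg k l := by
    funext a; exact FF_eq k hk hsupp a
  rw [h]
  have hd : HasDerivAt (fun s => ∫ l in (0:ℝ)..s, gg k l) (gg k s) s :=
    intervalIntegral.integral_hasDerivAt_right ((cont_gg k hk).intervalIntegrable _ _)
      ((cont_gg k hk).aestronglyMeasurable.stronglyMeasurableAtFilter)
      (cont_gg k hk).continuousAt
  have := (hasDerivAt_const s (FF k 0)).sub hd
  simp only [zero_sub] at this
  exact this

lemma cont_FF (k : ℝ → ℝ) (hk : ContDiff ℝ (⊤ : ℕ∞) k) (hsupp : Function.support k ⊆ Set.Icc 0 1) : Continuous (FF k) := by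
  have : Differentiable ℝ (FF k) := fun s => (hasDerivAt_FF k hk hsupp s).differentiableAt
  exact this.continuous

lemma cont_integrand (k : ℝ → ℝ) (hk : ContDiff ℝ (⊤ : ℕ∞) k) (hsupp : Function.support k ⊆ Set.Icc 0 1) : Continuous (fun s : ℝ => s * Real.exp (s^2/2) * FF k s) := by
  have := cont_FF k hk hsupp
  continuity

lemma hasDerivAt_GG (k : ℝ → ℝ) (hk : ContDiff ℝ (⊤ : ℕ∞) k) (hsupp : Function.support k ⊆ Set.Icc 0 1) (r : ℝ) :
    HasDerivAt (GG k) (r * Real.exp (r^2/2) * FF k r) r :=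
  intervalIntegral.integral_hasDerivAt_right
    ((cont_integrand k hk hsupp).intervalIntegrable _ _)
    ((cont_integrand k hk hsupp).aestronglyMeasurable.stronglyMeasurableAtFilter)
    (cont_integrand k hk hsupp).continuousAt

lemma hasDerivAt_phi0 (k : ℝ → ℝ) (hk : ContDiff ℝ (⊤ : ℕ∞) k) (hsupp : Function.support k ⊆ Set.Icc 0 1) (r : ℝ) (hr : 0 < r) :
    HasDerivAt (phi0 k) (GG k r / r^2 - Real.exp (r^2/2) * FF k r) r := by
  have h1 : HasDerivAt (fun x : ℝ => -(1/x)) ((r^2)⁻¹) r := by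
    have := (hasDerivAt_inv hr.ne').neg
    simp only [neg_neg] at this
    simp only [one_div]
    exact this
  have h2 := (h1.mul (hasDerivAt_GG k hk hsupp r))
  have : (phi0 k) = fun x => -(1/x) * GG k x := rfl
  rw [this]
  refine h2.congr_deriv ?_
  have hr0 : r ≠ 0 := hr.ne'
  field_simp
  ring

lemma deriv_phi0_eq (k : ℝ → ℝ) (hk : ContDiff ℝ (⊤ : ℕ∞) k) (hsupp : Function.support k ⊆ Set.Icc 0 1) (r : ℝ) (hr : 0 < r) :
    deriv (phi0 k) r = GG k r / r^2 - Real.exp (r^2/2) * FF k r :=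
  (hasDerivAt_phi0 k hk hsupp r hr).deriv


/-- φ₀ satisfies the self-similar ODE on (0,∞) and φ₀(0)=0 in the limit sense. -/
theorem stmt0 (k : ℝ → ℝ) (hk : ContDiff ℝ (⊤ : ℕ∞) k) (hsupp : Function.support k ⊆ Set.Icc 0 1) :
    (∀ r : ℝ, 0 < r →
      deriv (deriv (phi0 k)) r + (1/r) * deriv (phi0 k) r - (1/r^2) * phi0 k r
        - phi0 k r - r * deriv (phi0 k) r = k r) ∧
    Filter.Tendsto (phi0 k) (nhdsWithin 0 (Set.Ioi 0)) (nhds 0) := by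
  constructor
  · intro r hr
    -- second derivative
    have hψ : HasDerivAt (fun x => GG k x / x^2 - Real.exp (x^2/2) * FF k x)
        ((r * Real.exp (r^2/2) * FF k r) / r^2 - 2 * GG k r / r^3
          - (r * Real.exp (r^2/2) * FF k r + Real.exp (r^2/2) * (-(gg k r)))) r := by
      have hG := hasDerivAt_GG k hk hsupp r
      have hF := hasDerivAt_FF k hk hsupp r
      have hE2 : HasDerivAt (fun x : ℝ => Real.exp (x^2/2)) (r * Real.exp (r^2/2)) r := by
        have hx : HasDerivAt (fun x : ℝ => x^2/2) r r := by
          simpa using ((hasDerivAt_pow 2 r).div_const 2)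
        simpa [mul_comm] using (hx.exp)
      have h1 : HasDerivAt (fun x => GG k x / x^2)
          ((r * Real.exp (r^2/2) * FF k r) / r^2 - 2 * GG k r / r^3) r := by
        have := hG.div (hasDerivAt_pow 2 r) (by positivity)
        refine this.congr_deriv ?_
        have hr0 : r ≠ 0 := hr.ne'
        field_simp
        ring
      have h2 : HasDerivAt (fun x => Real.exp (x^2/2) * FF k x)
          (r * Real.exp (r^2/2) * FF k r + Real.exp (r^2/2) * (-(gg k r))) r :=
        hE2.mul hF
      exact h1.sub h2
    have heq : deriv (phi0 k) =ᶠ[nhds r] (fun x => GG k x / x^2 - Real.exp (x^2/2) * FF k x) := by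
      filter_upwards [Ioi_mem_nhds hr] with x hx
      exact deriv_phi0_eq k hk hsupp x hx
    have hdd : deriv (deriv (phi0 k)) r
        = (r * Real.exp (r^2/2) * FF k r) / r^2 - 2 * GG k r / r^3
          - (r * Real.exp (r^2/2) * FF k r + Real.exp (r^2/2) * (-(gg k r))) := by
      rw [heq.deriv_eq]
      exact hψ.deriv
    have hEg : Real.exp (r^2/2) * gg k r = k r := by
      simp only [gg, ← mul_assoc, ← Real.exp_add]
      ring_nf
      simp
    rw [hdd, deriv_phi0_eq k hk hsupp r hr, phi0_eq,
      show Real.exp (r^2/2) * (-(gg k r)) = -(k r) by rw [mul_neg, hEg]]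
    field_simp
    ring
  · have hG0 : HasDerivAt (GG k) 0 0 := by
      have := hasDerivAt_GG k hk hsupp 0
      simpa using this
    have hs := hasDerivAt_iff_tendsto_slope.mp hG0
    have h : Tendsto (fun r => GG k r / r) (nhdsWithin 0 (Set.Ioi 0)) (nhds 0) := by
      have h2 : Tendsto (slope (GG k) 0) (nhdsWithin 0 (Set.Ioi 0)) (nhds 0) :=
        hs.mono_left (nhdsWithin_mono _ (fun x hx => Set.mem_compl_singleton_iff.mpr (ne_of_gt hx)))
      refine h2.congr' ?_
      filter_upwards [self_mem_nhdsWithin] with x hx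
      simp [slope, GG, intervalIntegral.integral_same, div_eq_inv_mul]
    have : Tendsto (fun r => -(1/r) * GG k r) (nhdsWithin 0 (Set.Ioi 0)) (nhds 0) := by
      have := h.neg
      simp only [neg_zero] at this
      refine this.congr ?_
      intro x; field_simp
    exact this
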